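/- For the Langevin generator and A(x,v) = v, the fourth-derivative essential statistic satisfies E_{p_eq}[(L̃⁴A)·v]/(k_BT̃) = −3k_BT̃ E_{p_eq}[U⁽⁴⁾(x)] + E_{p_eq}[(U''(x))²] + 3E_{p_eq}[U'(x)U'''(x)] − 3γ̃² E_{p_eq}[U''(x)] + γ̃⁴. -/

import Mathlib

open MeasureTheory Real

lemma gauss_integrable_pow {b : ℝ} (hb : 0 < b) (k : ℕ) :
    Integrable fun x : ℝ => x ^ k * Real.exp (-b * x ^ 2) := by
  simpa [Real.rpow_natCast] using integrable_rpow_mul_exp_neg_mul_sq hb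
    (show (-1:ℝ) < (k:ℝ) from neg_one_lt_zero.trans_le (Nat.cast_nonneg k))

lemma gauss_step {b : ℝ} (hb : 0 < b) (n : ℕ) :
    ∫ x : ℝ, x ^ (n+2) * Real.exp (-b * x ^ 2)
      = ((n+1 : ℝ)/(2*b)) * ∫ x : ℝ, x ^ n * Real.exp (-b * x ^ 2) := by
  have hb' : (2*b) ≠ 0 := by positivity
  have hu : ∀ x : ℝ, HasDerivAt (fun y : ℝ => y ^ (n+1)) (((n:ℝ)+1) * x ^ n) x := by
    intro x
    have := hasDerivAt_pow (n+1) x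
    norm_num at this
    convert this using 1
  have hv : ∀ x : ℝ, HasDerivAt (fun y : ℝ => -(2*b)⁻¹ * Real.exp (-b * y ^ 2))
      (x * Real.exp (-b * x ^ 2)) x := by
    intro x
    have h1 : HasDerivAt (fun y : ℝ => -b * y ^ 2) (-b * (2 * x)) x := by
      have := (hasDerivAt_pow 2 x).const_mul (-b)
      norm_num at this
      simpa [neg_mul] using this
    have h2 := (h1.exp).const_mul (-(2*b)⁻¹)
    refine h2.congr_deriv ?_
    field_simp
  have huv' : Integrable (fun x : ℝ => x ^ (n+1) * (x * Real.exp (-b * x ^ 2))) :=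
    (gauss_integrable_pow hb (n+2)).congr (Filter.Eventually.of_forall fun x => by ring)
  have hu'v : Integrable (fun x : ℝ => (((n:ℝ)+1) * x ^ n) * (-(2*b)⁻¹ * Real.exp (-b * x ^ 2))) :=
    (((gauss_integrable_pow hb n).const_mul (((n:ℝ)+1) * -(2*b)⁻¹)).congr
      (Filter.Eventually.of_forall fun x => by ring))
  have huv : Integrable (fun x : ℝ => x ^ (n+1) * (-(2*b)⁻¹ * Real.exp (-b * x ^ 2))) :=
    (((gauss_integrable_pow hb (n+1)).const_mul (-(2*b)⁻¹)).congr
      (Filter.Eventually.of_forall fun x => by ring))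
  have key := integral_mul_deriv_eq_deriv_mul_of_integrable (fun x _ => hu x) (fun x _ => hv x) huv' hu'v huv
  have l1 : (∫ x : ℝ, x ^ (n+1) * (x * Real.exp (-b * x ^ 2)))
      = ∫ x : ℝ, x ^ (n+2) * Real.exp (-b * x ^ 2) := by
    congr 1; funext x; ring
  have l2 : (∫ x : ℝ, (((n:ℝ)+1) * x ^ n) * (-(2*b)⁻¹ * Real.exp (-b * x ^ 2)))
      = (((n:ℝ)+1) * -(2*b)⁻¹) * ∫ x : ℝ, x ^ n * Real.exp (-b * x ^ 2) := by
    rw [← integral_const_mul]; congr 1; funext x; ring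
  rw [l1, l2] at key
  rw [key]
  field_simp


/-- The Langevin generator. -/
noncomputable def Lgen (U : ℝ → ℝ) (γ kT : ℝ) : (ℝ → ℝ → ℝ) → (ℝ → ℝ → ℝ) := fun f x v =>
  v * deriv (fun s => f s v) x + (-(deriv U x) - γ * v) * deriv (f x) v
    + γ * kT * deriv (deriv (f x)) v

lemma Lop4_eq (U : ℝ → ℝ) (hU : ContDiff ℝ (⊤ : ℕ∞) U) (γ kT : ℝ) :
    Lgen U γ kT (Lgen U γ kT (Lgen U γ kT (Lgen U γ kT (fun _ v => v))))
      = fun x v =>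
        γ^3 * deriv U x + γ^4 * v + v * (deriv^[2] U x)^2
          + 3 * (v * (deriv U x * deriv^[3] U x)) + 4 * (γ * (v^2 * deriv^[3] U x))
          - v^3 * deriv^[4] U x - 2 * (γ * kT * deriv^[3] U x)
          - 2 * (γ * (deriv U x * deriv^[2] U x)) - 3 * (γ^2 * (v * deriv^[2] U x)) := by
  have hdn : ∀ n : ℕ, ∀ y : ℝ, HasDerivAt (deriv^[n] U) (deriv^[n+1] U y) y := by
    intro n y
    rw [Function.iterate_succ_apply']
    have hU' : ContDiff ℝ ((⊤:ℕ∞):WithTop ℕ∞) U := hU.of_le (by simp)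
    exact (((hU'.iterate_deriv n).differentiable (by simp)) y).hasDerivAt
  have h1' : ∀ y : ℝ, HasDerivAt U (deriv U y) y := hdn 0
  have h2' : ∀ y : ℝ, HasDerivAt (deriv U) (deriv^[2] U y) y := hdn 1
  have h3' : ∀ y : ℝ, HasDerivAt (deriv^[2] U) (deriv^[3] U y) y := hdn 2
  have h4' : ∀ y : ℝ, HasDerivAt (deriv^[3] U) (deriv^[4] U y) y := hdn 3
  have e1 : Lgen U γ kT (fun _ v => v) = fun x v => -(deriv U x) - γ * v := by
    funext x v
    show v * deriv (fun _ : ℝ => v) x + (-(deriv U x) - γ * v) * deriv (fun w : ℝ => w) v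
        + γ * kT * deriv (deriv (fun w : ℝ => w)) v = _
    have i1 : deriv (fun w : ℝ => w) = fun _ => (1:ℝ) := funext fun y => deriv_id y
    rw [deriv_const, i1, deriv_const]
    simp
  have e2 : Lgen U γ kT (fun x v => -(deriv U x) - γ * v)
      = fun x v => γ * deriv U x + γ^2 * v - v * deriv^[2] U x := by
    funext x v
    show v * deriv (fun s => -(deriv U s) - γ * v) x
        + (-(deriv U x) - γ * v) * deriv (fun w => -(deriv U x) - γ * w) v
        + γ * kT * deriv (deriv (fun w => -(deriv U x) - γ * w)) v = _
    have dx : HasDerivAt (fun s => -(deriv U s) - γ * v) (-(deriv^[2] U x)) x :=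
      ((h2' x).neg).sub_const (γ * v)
    have dv' : deriv (fun w => -(deriv U x) - γ * w) = fun _ => -γ := funext fun w => by
      simpa using (((hasDerivAt_id w).const_mul γ).const_sub (-(deriv U x))).deriv
    rw [dx.deriv, dv', deriv_const]
    simp
    ring
  have e3 : Lgen U γ kT (fun x v => γ * deriv U x + γ^2 * v - v * deriv^[2] U x)
      = fun x v => deriv U x * deriv^[2] U x - γ^2 * deriv U x - γ^3 * v
          + 2 * (γ * (v * deriv^[2] U x)) - v^2 * deriv^[3] U x := by
    funext x v
    show v * deriv (fun s => γ * deriv U s + γ^2 * v - v * deriv^[2] U s) x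
        + (-(deriv U x) - γ * v) * deriv (fun w => γ * deriv U x + γ^2 * w - w * deriv^[2] U x) v
        + γ * kT * deriv (deriv (fun w => γ * deriv U x + γ^2 * w - w * deriv^[2] U x)) v = _
    have dx : HasDerivAt (fun s => γ * deriv U s + γ^2 * v - v * deriv^[2] U s)
        (γ * deriv^[2] U x - v * deriv^[3] U x) x :=
      (((h2' x).const_mul γ).add_const (γ^2 * v)).sub ((h3' x).const_mul v)
    have dv' : deriv (fun w => γ * deriv U x + γ^2 * w - w * deriv^[2] U x)
        = fun _ => γ^2 - deriv^[2] U x := funext fun w => by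
      simpa [Pi.add_def, Pi.sub_def] using (((hasDerivAt_const w (γ * deriv U x)).add
        ((hasDerivAt_id w).const_mul (γ^2))).sub
        ((hasDerivAt_id w).mul_const (deriv^[2] U x))).deriv
    rw [dx.deriv, dv', deriv_const]
    simp
    ring
  have e4 : Lgen U γ kT (fun x v => deriv U x * deriv^[2] U x - γ^2 * deriv U x - γ^3 * v
          + 2 * (γ * (v * deriv^[2] U x)) - v^2 * deriv^[3] U x)
      = fun x v =>
        γ^3 * deriv U x + γ^4 * v + v * (deriv^[2] U x)^2
          + 3 * (v * (deriv U x * deriv^[3] U x)) + 4 * (γ * (v^2 * deriv^[3] U x))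
          - v^3 * deriv^[4] U x - 2 * (γ * kT * deriv^[3] U x)
          - 2 * (γ * (deriv U x * deriv^[2] U x)) - 3 * (γ^2 * (v * deriv^[2] U x)) := by
    funext x v
    show v * deriv (fun s => deriv U s * deriv^[2] U s - γ^2 * deriv U s - γ^3 * v
          + 2 * (γ * (v * deriv^[2] U s)) - v^2 * deriv^[3] U s) x
        + (-(deriv U x) - γ * v) * deriv (fun w => deriv U x * deriv^[2] U x - γ^2 * deriv U x
          - γ^3 * w + 2 * (γ * (w * deriv^[2] U x)) - w^2 * deriv^[3] U x) v
        + γ * kT * deriv (deriv (fun w => deriv U x * deriv^[2] U x - γ^2 * deriv U x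
          - γ^3 * w + 2 * (γ * (w * deriv^[2] U x)) - w^2 * deriv^[3] U x)) v = _
    have dx : HasDerivAt (fun s => deriv U s * deriv^[2] U s - γ^2 * deriv U s - γ^3 * v
          + 2 * (γ * (v * deriv^[2] U s)) - v^2 * deriv^[3] U s)
        ((deriv^[2] U x * deriv^[2] U x + deriv U x * deriv^[3] U x)
          - γ^2 * deriv^[2] U x + 2 * (γ * (v * deriv^[3] U x)) - v^2 * deriv^[4] U x) x := by
      exact (((((h2' x).mul (h3' x)).sub ((h2' x).const_mul (γ^2))).sub_const (γ^3 * v)).add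
        ((((h3' x).const_mul v).const_mul γ).const_mul 2)).sub ((h4' x).const_mul (v^2))
    have dv' : deriv (fun w => deriv U x * deriv^[2] U x - γ^2 * deriv U x
          - γ^3 * w + 2 * (γ * (w * deriv^[2] U x)) - w^2 * deriv^[3] U x)
        = fun w => 2 * (γ * deriv^[2] U x) - γ^3 - 2 * (w * deriv^[3] U x) := funext fun w => by
      have hA := (hasDerivAt_const w (deriv U x * deriv^[2] U x - γ^2 * deriv U x)).sub
        ((hasDerivAt_id w).const_mul (γ^3))
      have hB := hA.add ((((hasDerivAt_id w).mul_const (deriv^[2] U x)).const_mul γ).const_mul 2)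
      have hC := hB.sub ((hasDerivAt_pow 2 w).mul_const (deriv^[3] U x))
      have h5 := hC.deriv
      simp only [id_eq, Pi.add_def, Pi.sub_def] at h5
      rw [h5]
      norm_num
      try ring
    have d2v : deriv (fun w => 2 * (γ * deriv^[2] U x) - γ^3 - 2 * (w * deriv^[3] U x)) v
        = -(2 * deriv^[3] U x) := by
      have := ((hasDerivAt_const v (2 * (γ * deriv^[2] U x) - γ^3)).sub
        (((hasDerivAt_id v).mul_const (deriv^[3] U x)).const_mul 2))
      have h6 := this.deriv
      simp only [id_eq, Pi.add_def, Pi.sub_def] at h6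
      rw [h6]
      ring
    rw [dx.deriv, dv', d2v]
    simp only []
    ring
  rw [e1, e2, e3, e4]

lemma extract_left {f g : ℝ → ℝ} (hg : ∀ v, g v ≠ 0)
    (hfg : Integrable (fun q : ℝ × ℝ => f q.1 * g q.2)) : Integrable f := by
  rw [Measure.volume_eq_prod] at hfg
  obtain ⟨v, hv⟩ := hfg.prod_left_ae.exists
  have h2 := hv.mul_const (g v)⁻¹
  simpa [mul_assoc, mul_inv_cancel₀ (hg v)] using h2

/-- Fourth-derivative essential statistic of the Langevin model:
`E[(L̃⁴A)v]/(k_BT̃) = −3k_BT̃E[U⁽⁴⁾] + E[(U'')²] + 3E[U'U'''] − 3γ̃²E[U''] + γ̃⁴`. -/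
theorem langevin_fourth_derivative_statistic
    (U : ℝ → ℝ) (hU : ContDiff ℝ (⊤ : ℕ∞) U) (γ kT : ℝ) (hγ : 0 < γ) (hkT : 0 < kT)
    (Z : ℝ) (hZpos : 0 < Z)
    (hZ : (∫ q : ℝ × ℝ, Real.exp (-(U q.1 + q.2 ^ 2 / 2) / kT)) = Z) :
    let p : ℝ × ℝ → ℝ := fun q => Z⁻¹ * Real.exp (-(U q.1 + q.2 ^ 2 / 2) / kT)
    let Lop : (ℝ → ℝ → ℝ) → (ℝ → ℝ → ℝ) := fun f x v =>
      v * deriv (fun s => f s v) x + (-(deriv U x) - γ * v) * deriv (f x) v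
        + γ * kT * deriv (deriv (f x)) v
    let A : ℝ → ℝ → ℝ := fun _ v => v
    Integrable (fun q : ℝ × ℝ => Lop (Lop (Lop (Lop A))) q.1 q.2 * q.2 * p q) →
    Integrable (fun q : ℝ × ℝ => deriv^[2] U q.1 * p q) →
    Integrable (fun q : ℝ × ℝ => (deriv^[2] U q.1) ^ 2 * p q) →
    Integrable (fun q : ℝ × ℝ => deriv U q.1 * deriv^[3] U q.1 * p q) →
    Integrable (fun q : ℝ × ℝ => deriv^[4] U q.1 * p q) →
    (∫ q : ℝ × ℝ, Lop (Lop (Lop (Lop A))) q.1 q.2 * q.2 * p q) / kT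
      = -3 * kT * (∫ q : ℝ × ℝ, deriv^[4] U q.1 * p q)
        + (∫ q : ℝ × ℝ, (deriv^[2] U q.1) ^ 2 * p q)
        + 3 * (∫ q : ℝ × ℝ, deriv U q.1 * deriv^[3] U q.1 * p q)
        - 3 * γ ^ 2 * (∫ q : ℝ × ℝ, deriv^[2] U q.1 * p q)
        + γ ^ 4 := by
  intro p Lop A hF hI2 hI2sq hI13 hI4
  -- shorthand notation
  set G : ℝ → ℝ := fun x => Real.exp (-U x / kT) with hGdef
  set e2f : ℝ → ℝ := fun v => Real.exp (-(1/(2*kT)) * v ^ 2) with he2fdef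
  have hb : (0:ℝ) < 1/(2*kT) := by positivity
  have hGE : ∀ x v : ℝ, Real.exp (-(U x + v ^ 2 / 2) / kT) = G x * e2f v := by
    intro x v
    rw [hGdef, he2fdef, ← Real.exp_add]
    congr 1
    field_simp
    ring
  have hp : ∀ q : ℝ × ℝ, p q = Z⁻¹ * (G q.1 * e2f q.2) := fun q => by
    show Z⁻¹ * Real.exp (-(U q.1 + q.2 ^ 2 / 2) / kT) = _
    rw [hGE]
  have he2neg : ∀ v : ℝ, e2f (-v) = e2f v := by
    intro v
    rw [he2fdef]
    simp only []
    congr 1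
    ring
  have hIek : ∀ k : ℕ, Integrable (fun v : ℝ => v ^ k * e2f v) := fun k =>
    gauss_integrable_pow hb k
  have hIe : Integrable e2f := by
    have := hIek 0
    simpa using this
  -- Gaussian moments
  have hM2 : (∫ v : ℝ, v ^ 2 * e2f v) = kT * ∫ v : ℝ, e2f v := by
    have h := gauss_step hb 0
    rw [show (0+2) = 2 from rfl] at h
    simp only [pow_zero, one_mul, Nat.cast_zero, zero_add] at h
    rw [h]
    congr 1
    field_simp
  have hM4 : (∫ v : ℝ, v ^ 4 * e2f v) = 3 * kT ^ 2 * ∫ v : ℝ, e2f v := by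
    have h := gauss_step hb 2
    rw [show (2+2) = 4 from rfl] at h
    rw [h, hM2]
    push_cast
    field_simp
    ring
  have hpos : ∀ v : ℝ, e2f v ≠ 0 := fun v => by
    rw [he2fdef]; exact (Real.exp_pos _).ne'
  have hgne : ∀ v : ℝ, Z⁻¹ * e2f v ≠ 0 := fun v =>
    mul_ne_zero (inv_ne_zero hZpos.ne') (hpos v)
  -- 1D integrability extractions
  have hU4G : Integrable (fun x => deriv^[4] U x * G x) :=
    extract_left hgne (hI4.congr (Filter.Eventually.of_forall fun q => by simp only [hp]; ring))
  have hU2G : Integrable (fun x => deriv^[2] U x * G x) :=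
    extract_left hgne (hI2.congr (Filter.Eventually.of_forall fun q => by simp only [hp]; ring))
  have hU2sqG : Integrable (fun x => (deriv^[2] U x) ^ 2 * G x) :=
    extract_left hgne (hI2sq.congr (Filter.Eventually.of_forall fun q => by simp only [hp]; ring))
  have hU13G : Integrable (fun x => deriv U x * deriv^[3] U x * G x) :=
    extract_left hgne (hI13.congr (Filter.Eventually.of_forall fun q => by simp only [hp]; ring))
  have hZint : Integrable (fun q : ℝ × ℝ => Real.exp (-(U q.1 + q.2 ^ 2 / 2) / kT)) := by
    by_contra hc
    rw [integral_undef hc] at hZ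
    exact hZpos.ne' hZ.symm
  have hG : Integrable G :=
    extract_left hpos (hZint.congr (Filter.Eventually.of_forall fun q => hGE q.1 q.2))
  -- the symbolic formula for the integrand
  have hLop : Lop = Lgen U γ kT := rfl
  have hL4f := Lop4_eq U hU γ kT
  set Ff : ℝ × ℝ → ℝ := fun q : ℝ × ℝ =>
      (γ^3 * deriv U q.1 + γ^4 * q.2 + q.2 * (deriv^[2] U q.1)^2
        + 3 * (q.2 * (deriv U q.1 * deriv^[3] U q.1)) + 4 * (γ * (q.2^2 * deriv^[3] U q.1))
        - q.2^3 * deriv^[4] U q.1 - 2 * (γ * kT * deriv^[3] U q.1)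
        - 2 * (γ * (deriv U q.1 * deriv^[2] U q.1)) - 3 * (γ^2 * (q.2 * deriv^[2] U q.1)))
        * q.2 * (Z⁻¹ * (G q.1 * e2f q.2)) with hFfdef
  have hFeq : (fun q : ℝ × ℝ => Lop (Lop (Lop (Lop A))) q.1 q.2 * q.2 * p q) = Ff := by
    funext q
    rw [hLop, show A = (fun _ v : ℝ => v) from rfl, hL4f, hp q, hFfdef]
  rw [hFeq] at hF ⊢
  rw [Measure.volume_eq_prod] at hF hI2 hI2sq hI13 hI4 hZ ⊢
  -- product-form evaluations of the right-hand integrals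
  have hI4eq : (∫ q : ℝ × ℝ, deriv^[4] U q.1 * p q ∂(Measure.prod volume volume))
      = Z⁻¹ * (∫ x : ℝ, deriv^[4] U x * G x) * ∫ v : ℝ, e2f v := by
    rw [show (fun q : ℝ × ℝ => deriv^[4] U q.1 * p q)
        = fun q : ℝ × ℝ => (fun x => Z⁻¹ * (deriv^[4] U x * G x)) q.1 * e2f q.2 from
      funext fun q => by simp only [hp]; ring]
    rw [integral_prod_mul (fun x => Z⁻¹ * (deriv^[4] U x * G x)) e2f, integral_const_mul]
  have hI2eq : (∫ q : ℝ × ℝ, deriv^[2] U q.1 * p q ∂(Measure.prod volume volume))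
      = Z⁻¹ * (∫ x : ℝ, deriv^[2] U x * G x) * ∫ v : ℝ, e2f v := by
    rw [show (fun q : ℝ × ℝ => deriv^[2] U q.1 * p q)
        = fun q : ℝ × ℝ => (fun x => Z⁻¹ * (deriv^[2] U x * G x)) q.1 * e2f q.2 from
      funext fun q => by simp only [hp]; ring]
    rw [integral_prod_mul (fun x => Z⁻¹ * (deriv^[2] U x * G x)) e2f, integral_const_mul]
  have hI2sqeq : (∫ q : ℝ × ℝ, (deriv^[2] U q.1) ^ 2 * p q ∂(Measure.prod volume volume))
      = Z⁻¹ * (∫ x : ℝ, (deriv^[2] U x) ^ 2 * G x) * ∫ v : ℝ, e2f v := by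
    rw [show (fun q : ℝ × ℝ => (deriv^[2] U q.1) ^ 2 * p q)
        = fun q : ℝ × ℝ => (fun x => Z⁻¹ * ((deriv^[2] U x) ^ 2 * G x)) q.1 * e2f q.2 from
      funext fun q => by simp only [hp]; ring]
    rw [integral_prod_mul (fun x => Z⁻¹ * ((deriv^[2] U x) ^ 2 * G x)) e2f, integral_const_mul]
  have hI13eq : (∫ q : ℝ × ℝ, deriv U q.1 * deriv^[3] U q.1 * p q ∂(Measure.prod volume volume))
      = Z⁻¹ * (∫ x : ℝ, deriv U x * deriv^[3] U x * G x) * ∫ v : ℝ, e2f v := by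
    rw [show (fun q : ℝ × ℝ => deriv U q.1 * deriv^[3] U q.1 * p q)
        = fun q : ℝ × ℝ => (fun x => Z⁻¹ * (deriv U x * deriv^[3] U x * G x)) q.1 * e2f q.2 from
      funext fun q => by simp only [hp]; ring]
    rw [integral_prod_mul (fun x => Z⁻¹ * (deriv U x * deriv^[3] U x * G x)) e2f, integral_const_mul]
  have hZeq : Z = (∫ x : ℝ, G x) * ∫ v : ℝ, e2f v := by
    rw [← hZ, show (fun q : ℝ × ℝ => Real.exp (-(U q.1 + q.2 ^ 2 / 2) / kT))
        = fun q : ℝ × ℝ => G q.1 * e2f q.2 from funext fun q => hGE q.1 q.2,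
      integral_prod_mul G e2f]
  -- integrability of the marginal coefficient functions
  have ha : Integrable (fun x => -(Z⁻¹ * (deriv^[4] U x * G x))) := (hU4G.const_mul Z⁻¹).neg
  have hB1 : Integrable (fun x : ℝ => 3 * (deriv U x * deriv^[3] U x * G x)) :=
    hU13G.const_mul 3
  have hB2 : Integrable (fun x : ℝ => (deriv^[2] U x) ^ 2 * G x
      + 3 * (deriv U x * deriv^[3] U x * G x)) := hU2sqG.add hB1
  have hB3 : Integrable (fun x : ℝ => 3 * γ ^ 2 * (deriv^[2] U x * G x)) :=
    hU2G.const_mul (3 * γ ^ 2)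
  have hB4 : Integrable (fun x : ℝ => (deriv^[2] U x) ^ 2 * G x
      + 3 * (deriv U x * deriv^[3] U x * G x) - 3 * γ ^ 2 * (deriv^[2] U x * G x)) :=
    hB2.sub hB3
  have hB5 : Integrable (fun x : ℝ => γ ^ 4 * G x) := hG.const_mul (γ ^ 4)
  have hc : Integrable (fun x => Z⁻¹ * ((deriv^[2] U x) ^ 2 * G x
      + 3 * (deriv U x * deriv^[3] U x * G x) - 3 * γ ^ 2 * (deriv^[2] U x * G x)
      + γ ^ 4 * G x)) := (hB4.add hB5).const_mul Z⁻¹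
  -- the inner (velocity) integral, using the even part
  have hinner : ∀ᵐ x : ℝ, (∫ v : ℝ, Ff (x, v))
      = (-(Z⁻¹ * (deriv^[4] U x * G x))) * (∫ v : ℝ, v ^ 4 * e2f v)
        + (Z⁻¹ * ((deriv^[2] U x) ^ 2 * G x + 3 * (deriv U x * deriv^[3] U x * G x)
            - 3 * γ ^ 2 * (deriv^[2] U x * G x) + γ ^ 4 * G x)) * (∫ v : ℝ, v ^ 2 * e2f v) := by
    filter_upwards [hF.prod_right_ae] with x hx
    have hxneg : Integrable (fun v : ℝ => Ff (x, -v)) := hx.comp_neg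
    have hrefl : (∫ v : ℝ, Ff (x, -v)) = ∫ v : ℝ, Ff (x, v) :=
      integral_neg_eq_self (fun v => Ff (x, v)) volume
    have heven : ∀ v : ℝ, Ff (x, v) + Ff (x, -v)
        = 2 * ((-(Z⁻¹ * (deriv^[4] U x * G x))) * (v ^ 4 * e2f v)
          + (Z⁻¹ * ((deriv^[2] U x) ^ 2 * G x + 3 * (deriv U x * deriv^[3] U x * G x)
              - 3 * γ ^ 2 * (deriv^[2] U x * G x) + γ ^ 4 * G x)) * (v ^ 2 * e2f v)) := by
      intro v
      rw [hFfdef]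
      simp only []
      rw [he2neg v]
      ring
    have h2I : (∫ v : ℝ, (Ff (x, v) + Ff (x, -v))) = 2 * ∫ v : ℝ, Ff (x, v) := by
      rw [integral_add hx hxneg, hrefl]
      ring
    have hsplit : (∫ v : ℝ, (Ff (x, v) + Ff (x, -v)))
        = 2 * ((-(Z⁻¹ * (deriv^[4] U x * G x))) * (∫ v : ℝ, v ^ 4 * e2f v)
          + (Z⁻¹ * ((deriv^[2] U x) ^ 2 * G x + 3 * (deriv U x * deriv^[3] U x * G x)
              - 3 * γ ^ 2 * (deriv^[2] U x * G x) + γ ^ 4 * G x)) * (∫ v : ℝ, v ^ 2 * e2f v)) := by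
      have e1 : (∫ v : ℝ, (Ff (x, v) + Ff (x, -v)))
          = ∫ v : ℝ, 2 * ((-(Z⁻¹ * (deriv^[4] U x * G x))) * (v ^ 4 * e2f v)
            + (Z⁻¹ * ((deriv^[2] U x) ^ 2 * G x + 3 * (deriv U x * deriv^[3] U x * G x)
                - 3 * γ ^ 2 * (deriv^[2] U x * G x) + γ ^ 4 * G x)) * (v ^ 2 * e2f v)) := by
        congr 1
        funext v
        exact heven v
      rw [e1, integral_const_mul,
        integral_add ((hIek 4).const_mul _) ((hIek 2).const_mul _),
        integral_const_mul, integral_const_mul]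
    linarith [h2I, hsplit]
  -- assemble the double integral
  have hIF : (∫ q : ℝ × ℝ, Ff q ∂(Measure.prod volume volume))
      = (-(Z⁻¹ * (∫ x : ℝ, deriv^[4] U x * G x))) * (3 * kT ^ 2 * ∫ v : ℝ, e2f v)
        + (Z⁻¹ * ((∫ x : ℝ, (deriv^[2] U x) ^ 2 * G x)
            + 3 * (∫ x : ℝ, deriv U x * deriv^[3] U x * G x)
            - 3 * γ ^ 2 * (∫ x : ℝ, deriv^[2] U x * G x)
            + γ ^ 4 * ∫ x : ℝ, G x)) * (kT * ∫ v : ℝ, e2f v) := by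
    rw [integral_prod _ hF, integral_congr_ae hinner,
      integral_add (ha.mul_const _) (hc.mul_const _), integral_mul_const, integral_mul_const,
      integral_neg, integral_const_mul, integral_const_mul,
      integral_add hB4 hB5, integral_sub hB2 hB3, integral_add hU2sqG hB1,
      integral_const_mul, integral_const_mul, integral_const_mul, hM2, hM4]
  rw [hIF, hI4eq, hI2eq, hI2sqeq, hI13eq]
  -- final algebra
  have hne : (∫ x : ℝ, G x) * (∫ v : ℝ, e2f v) ≠ 0 := by
    rw [← hZeq]; exact hZpos.ne'
  have hGne : (∫ x : ℝ, G x) ≠ 0 := (mul_ne_zero_iff.mp hne).1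
  have hEne : (∫ v : ℝ, e2f v) ≠ 0 := (mul_ne_zero_iff.mp hne).2
  rw [hZeq]
  field_simp
  ring
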